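/- Let T = (S,Σ,κ) be an STS, μ a probability measure on S, and B ∈ Σ with avoid-set B̃. Define, for n ∈ ℕ, p_n^Yes = Prob_μ(F≤n B) and p_n^No = Prob_μ((S∖B) U≤n B̃). If T is D(μ,B), then the sequence (p_n^Yes) is nondecreasing, the sequence (1 − p_n^No) is nonincreasing, p_n^Yes ≤ 1 − p_n^No for all n, and both sequences converge to Prob_μ(F B); in particular lim_{n→∞}(p_n^Yes + p_n^No) = 1. -/

import Mathlib

open MeasureTheory ProbabilityTheory ENNReal Filter Topology

namespace STS

variable {S : Type*} [MeasurableSpace S]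

/-- Probability of the cylinder `Cyl(A 0, …, A n)` for the Markov chain with kernel `κ`
and initial distribution `μ`. -/
noncomputable def cylProb (κ : Kernel S S) : ℕ → Measure S → (ℕ → Set S) → ℝ≥0∞
  | 0, μ, A => μ (A 0)
  | n + 1, μ, A => ∫⁻ s in A 0, cylProb κ n (κ s) (fun i => A (i + 1)) ∂μ

/-- `P` assigns to each initial (probability) distribution the path measure (on `ℕ → S`,
with the product σ-algebra) of the time-homogeneous Markov chain with transition kernel `κ`,
as given by the Ionescu–Tulcea construction: it is the unique probability measure giving
cylinders their prescribed probabilities. -/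
def IsPathMeasure (κ : Kernel S S) (P : Measure S → Measure (ℕ → S)) : Prop :=
  ∀ μ : Measure S, IsProbabilityMeasure μ →
    IsProbabilityMeasure (P μ) ∧
    ∀ (n : ℕ) (A : ℕ → Set S), (∀ i, MeasurableSet (A i)) →
      P μ {ρ | ∀ i ≤ n, ρ i ∈ A i} = cylProb κ n μ A

/-- The path event `F B`: eventually reach `B`. -/
def evF (B : Set S) : Set (ℕ → S) := {ρ | ∃ k, ρ k ∈ B}

/-- The path event `F≤n B`. -/
def evFle (n : ℕ) (B : Set S) : Set (ℕ → S) := {ρ | ∃ k ≤ n, ρ k ∈ B}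

/-- The path event `F≥p B`. -/
def evFge (p : ℕ) (B : Set S) : Set (ℕ → S) := {ρ | ∃ k, p ≤ k ∧ ρ k ∈ B}

/-- The path event `GF B`: visit `B` infinitely often. -/
def evGF (B : Set S) : Set (ℕ → S) := {ρ | ∀ n, ∃ k, n ≤ k ∧ ρ k ∈ B}

/-- The path event `FG B`: eventually stay in `B` forever. -/
def evFG (B : Set S) : Set (ℕ → S) := {ρ | ∃ n, ∀ k, n ≤ k → ρ k ∈ B}

/-- The until event `B' U B`. -/
def evU (B' B : Set S) : Set (ℕ → S) := {ρ | ∃ k, ρ k ∈ B ∧ ∀ j < k, ρ j ∈ B'}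

/-- The bounded until event `B' U≤n B`. -/
def evUle (n : ℕ) (B' B : Set S) : Set (ℕ → S) := {ρ | ∃ k ≤ n, ρ k ∈ B ∧ ∀ j < k, ρ j ∈ B'}

/-- The avoid-set `B̃` of `B`: states from which `B` is reached with probability `0`. -/
def avoid (P : Measure S → Measure (ℕ → S)) (B : Set S) : Set S :=
  {s | P (Measure.dirac s) (evF B) = 0}

/-- `T` is decisive w.r.t. `B` from `μ`. -/
def Decisive (P : Measure S → Measure (ℕ → S)) (μ : Measure S) (B : Set S) : Prop :=
  P μ (evF B ∪ evF (avoid P B)) = 1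

/-- `T` is strongly decisive w.r.t. `B` from `μ`. -/
def StronglyDecisive (P : Measure S → Measure (ℕ → S)) (μ : Measure S) (B : Set S) : Prop :=
  P μ (evGF B ∪ evF (avoid P B)) = 1

/-- `T` is persistently decisive w.r.t. `B` from `μ`. -/
def PersistentlyDecisive (P : Measure S → Measure (ℕ → S)) (μ : Measure S) (B : Set S) : Prop :=
  ∀ p : ℕ, P μ (evFge p B ∪ evFge p (avoid P B)) = 1

/-- `PreProb(B)`: measurable sets `B'` from which `B` is reached in one step with positive
probability, whatever the initial distribution concentrated on `B'`. -/
def PreProb (P : Measure S → Measure (ℕ → S)) (B : Set S) : Set (Set S) :=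
  {B' | MeasurableSet B' ∧ ∀ μ' : Measure S, IsProbabilityMeasure μ' → μ' B' = 1 →
    0 < P μ' {ρ | ρ 0 ∈ B' ∧ ρ 1 ∈ B}}

/-- `T` is fair w.r.t. `B` from `μ`. -/
def Fair (P : Measure S → Measure (ℕ → S)) (μ : Measure S) (B : Set S) : Prop :=
  ∀ B' ∈ PreProb P B, 0 < P μ (evGF B') →
    P μ (evGF B ∩ evGF B') = P μ (evGF B')

/-- The one-step measure transformer `Ω_T`. -/
noncomputable def Omega (κ : Kernel S S) (μ : Measure S) : Measure S :=
  μ.bind (fun s => κ s)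

/-- Two measures are qualitatively equivalent if they have the same null (measurable) sets. -/
def QualEquiv {T : Type*} [MeasurableSpace T] (μ ν : Measure T) : Prop :=
  ∀ A : Set T, MeasurableSet A → (μ A = 0 ↔ ν A = 0)

/-- `T₂ = (S₂,κ₂)` is an `α`-abstraction of `T₁ = (S₁,κ₁)`. -/
def IsAbstraction {S₁ S₂ : Type*} [MeasurableSpace S₁] [MeasurableSpace S₂]
    (κ₁ : Kernel S₁ S₁) (κ₂ : Kernel S₂ S₂) (α : S₁ → S₂) : Prop :=
  ∀ μ : Measure S₁, IsProbabilityMeasure μ →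
    QualEquiv (Measure.map α (Omega κ₁ μ)) (Omega κ₂ (Measure.map α μ))

end STS

/-!
Reaching `B` after visiting the avoid-set `B̃` is a null event: by the Markov property the
probability of `ρ k ∈ B̃, ρ (k + n) ∈ B` is an integral, over the law of `ρ k` restricted to
`B̃`, of probabilities of reaching `B` from a state of `B̃`, which vanish by definition.
Hence `F B` and `(S∖B) U B̃` are almost disjoint, while decisiveness says that their union has
full measure (a path reaching `B̃` either hits `B` earlier or stays in `S∖B` until then). So
`Prob_μ(F B) + Prob_μ((S∖B) U B̃) = 1`, and the bounded events increase to these two events.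
-/

section AdjacentSequences

variable {α : Type*} [MeasurableSpace α] {ν : Measure α} {E F : ℕ → Set α} {E' F' : Set α}

theorem measure_add_measure_eq_one_of_ae_partition (hE' : MeasurableSet E')
    (hinter : ν (E' ∩ F') = 0) (hunion : ν (E' ∪ F') = 1) : ν E' + ν F' = 1 := by
  rw [add_comm, ← measure_union_add_inter F' hE', Set.union_comm, Set.inter_comm, hinter,
    hunion, add_zero]

theorem adjacent_of_monotone_of_ae_partition [IsProbabilityMeasure ν] (hE : Monotone E)
    (hF : Monotone F) (hEE' : ⋃ n, E n = E') (hFF' : ⋃ n, F n = F') (hE' : MeasurableSet E')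
    (hinter : ν (E' ∩ F') = 0) (hunion : ν (E' ∪ F') = 1) :
    Monotone (fun n => ν (E n)) ∧
    Antitone (fun n => 1 - ν (F n)) ∧
    (∀ n, ν (E n) ≤ 1 - ν (F n)) ∧
    Tendsto (fun n => ν (E n)) atTop (𝓝 (ν E')) ∧
    Tendsto (fun n => 1 - ν (F n)) atTop (𝓝 (ν E')) ∧
    Tendsto (fun n => ν (E n) + ν (F n)) atTop (𝓝 1) := by
  have hsum := measure_add_measure_eq_one_of_ae_partition hE' hinter hunion
  have hlimE : Tendsto (fun n => ν (E n)) atTop (𝓝 (ν E')) :=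
    hEE' ▸ tendsto_measure_iUnion_atTop hE
  have hlimF : Tendsto (fun n => ν (F n)) atTop (𝓝 (ν F')) :=
    hFF' ▸ tendsto_measure_iUnion_atTop hF
  have hle : ∀ n, ν (E n) ≤ ν E' := fun n => measure_mono (hEE' ▸ Set.subset_iUnion E n)
  have hle' : ∀ n, ν (F n) ≤ ν F' := fun n => measure_mono (hFF' ▸ Set.subset_iUnion F n)
  refine ⟨fun _ _ h => measure_mono (hE h),
    fun _ _ h => tsub_le_tsub_left (measure_mono (hF h)) 1,
    fun n => ENNReal.le_sub_of_add_le_right (measure_ne_top _ _)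
      (hsum ▸ add_le_add (hle n) (hle' n)), hlimE, ?_, hsum ▸ hlimE.add hlimF⟩
  rw [← ENNReal.sub_eq_of_eq_add (measure_ne_top _ _) hsum.symm]
  exact ENNReal.Tendsto.sub tendsto_const_nhds hlimF (Or.inl ENNReal.one_ne_top)

end AdjacentSequences

namespace STS

section PathEvents

variable {S : Type*}

def cyl (n : ℕ) (A : ℕ → Set S) : Set (ℕ → S) := {ρ | ∀ i ≤ n, ρ i ∈ A i}

theorem measurableSet_cyl [MeasurableSpace S] {A : ℕ → Set S} (hA : ∀ i, MeasurableSet (A i))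
    (n : ℕ) : MeasurableSet (cyl n A) := by
  simp only [cyl, Set.ofPred_forall]
  exact .iInter fun i => .iInter fun _ => measurable_pi_apply i (hA i)

theorem measurableSet_evF [MeasurableSpace S] {B : Set S} (hB : MeasurableSet B) :
    MeasurableSet (evF B) := by
  simp only [evF, Set.ofPred_exists]
  exact .iUnion fun k => measurable_pi_apply k hB

theorem evFle_eq_compl_cyl (n : ℕ) (B : Set S) : evFle n B = (cyl n fun _ => Bᶜ)ᶜ := by
  ext ρ
  simp [evFle, cyl]

theorem monotone_evFle (B : Set S) : Monotone fun n => evFle n B :=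
  fun _ _ hmn _ ⟨k, hk, hρ⟩ => ⟨k, hk.trans hmn, hρ⟩

theorem monotone_evUle (B' B : Set S) : Monotone fun n => evUle n B' B :=
  fun _ _ hmn _ ⟨k, hk, hρ⟩ => ⟨k, hk.trans hmn, hρ⟩

theorem iUnion_evFle (B : Set S) : ⋃ n, evFle n B = evF B := by
  ext ρ
  simp only [Set.mem_iUnion, evFle, evF, Set.mem_ofPred_eq]
  exact ⟨fun ⟨_, k, _, hk⟩ => ⟨k, hk⟩, fun ⟨k, hk⟩ => ⟨k, k, le_rfl, hk⟩⟩

theorem iUnion_evUle (B' B : Set S) : ⋃ n, evUle n B' B = evU B' B := by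
  ext ρ
  simp only [Set.mem_iUnion, evUle, evU, Set.mem_ofPred_eq]
  exact ⟨fun ⟨_, k, _, hk⟩ => ⟨k, hk⟩, fun ⟨k, hk⟩ => ⟨k, k, le_rfl, hk⟩⟩

theorem evF_union_evF_subset_evF_union_evU (B B' : Set S) :
    evF B ∪ evF B' ⊆ evF B ∪ evU Bᶜ B' := by
  rintro ρ (hB | ⟨k, hk⟩)
  · exact .inl hB
  · by_cases hearly : ∃ j < k, ρ j ∈ B
    · obtain ⟨j, -, hj⟩ := hearly
      exact .inl ⟨j, hj⟩
    · push Not at hearly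
      exact .inr ⟨k, hk, hearly⟩

end PathEvents

variable {S : Type*} [MeasurableSpace S]

section CylinderProbabilities

variable {κ : Kernel S S} [IsSFiniteKernel κ]

theorem measurable_cylProb_kernel (η : Kernel S S) [IsSFiniteKernel η] (n : ℕ) {A : ℕ → Set S}
    (hA : ∀ i, MeasurableSet (A i)) : Measurable fun s => cylProb κ n (η s) A := by
  induction n generalizing η A with
  | zero => exact η.measurable_coe (hA 0)
  | succ n ih => exact (ih κ fun i => hA (i + 1)).setLIntegral_kernel (hA 0)

theorem measurable_cylProb_dirac (n : ℕ) {A : ℕ → Set S} (hA : ∀ i, MeasurableSet (A i)) :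
    Measurable fun s => cylProb κ n (Measure.dirac s) A := by
  simpa only [Kernel.deterministic_apply, id] using
    measurable_cylProb_kernel (κ := κ) (Kernel.deterministic id measurable_id) n hA

theorem cylProb_succ_dirac (n : ℕ) {A : ℕ → Set S} (hA : ∀ i, MeasurableSet (A i)) {s : S}
    (hs : s ∈ A 0) :
    cylProb κ (n + 1) (Measure.dirac s) A = cylProb κ n (κ s) fun i => A (i + 1) := by
  classical
  rw [cylProb, setLIntegral_dirac' (measurable_cylProb_kernel κ n fun i => hA (i + 1)) (hA 0),
    if_pos hs]

theorem cylProb_eq_zero_of_forall_dirac (n : ℕ) (μ : Measure S) {A : ℕ → Set S}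
    (hA : ∀ i, MeasurableSet (A i)) (h : ∀ s ∈ A 0, cylProb κ n (Measure.dirac s) A = 0) :
    cylProb κ n μ A = 0 := by
  cases n with
  | zero =>
    have hempty : A 0 = ∅ := Set.eq_empty_of_forall_notMem fun s hs => by
      simpa [cylProb, Measure.dirac_apply_of_mem hs] using h s hs
    simp [cylProb, hempty]
  | succ n =>
    rw [cylProb, setLIntegral_congr_fun (hA 0) fun s hs => (cylProb_succ_dirac n hA hs).symm.trans
      (h s hs), lintegral_zero]

theorem cylProb_eq_zero_of_shift (k n : ℕ) (μ : Measure S) {A : ℕ → Set S}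
    (hA : ∀ i, MeasurableSet (A i)) (huniv : ∀ i < k, A i = Set.univ)
    (h : ∀ s ∈ A k, cylProb κ n (Measure.dirac s) (fun i => A (i + k)) = 0) :
    cylProb κ (n + k) μ A = 0 := by
  induction k generalizing μ A with
  | zero => exact cylProb_eq_zero_of_forall_dirac n μ hA h
  | succ k ih =>
    rw [← add_assoc, cylProb, huniv 0 k.succ_pos, Measure.restrict_univ]
    refine (lintegral_congr fun s => ih (κ s) (fun i => hA (i + 1))
      (fun i hi => huniv (i + 1) (by omega)) h).trans lintegral_zero

end CylinderProbabilities

section AvoidSet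

variable {κ : Kernel S S} {P : Measure S → Measure (ℕ → S)} {B : Set S}

theorem measure_cyl (hP : IsPathMeasure κ P) {μ : Measure S} (hμ : IsProbabilityMeasure μ)
    (n : ℕ) {A : ℕ → Set S} (hA : ∀ i, MeasurableSet (A i)) : P μ (cyl n A) = cylProb κ n μ A :=
  (hP μ hμ).2 n A hA

variable [IsMarkovKernel κ]

theorem measurable_measure_dirac_evF (hP : IsPathMeasure κ P) (hB : MeasurableSet B) :
    Measurable fun s => P (Measure.dirac s) (evF B) := by
  have hsup : ∀ s, P (Measure.dirac s) (evF B)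
      = ⨆ n, 1 - cylProb κ n (Measure.dirac s) fun _ => Bᶜ := by
    intro s
    have := (hP (Measure.dirac s) inferInstance).1
    rw [← iUnion_evFle, (monotone_evFle B).measure_iUnion]
    refine iSup_congr fun n => ?_
    rw [evFle_eq_compl_cyl, prob_compl_eq_one_sub (measurableSet_cyl (fun _ => hB.compl) n),
      measure_cyl hP inferInstance n fun _ => hB.compl]
  simp_rw [hsup]
  exact .iSup fun n => (measurable_cylProb_dirac n fun _ => hB.compl).const_sub 1

theorem measurableSet_avoid (hP : IsPathMeasure κ P) (hB : MeasurableSet B) :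
    MeasurableSet (avoid P B) :=
  measurable_measure_dirac_evF hP hB (measurableSet_singleton 0)

theorem measure_mem_avoid_and_mem_eq_zero (hP : IsPathMeasure κ P) {μ : Measure S}
    (hμ : IsProbabilityMeasure μ) (hB : MeasurableSet B) (k n : ℕ) :
    P μ {ρ | ρ k ∈ avoid P B ∧ ρ (n + k) ∈ B} = 0 := by
  classical
  -- an intersection rather than a case split, so that `n = 0` needs no separate treatment
  set A : ℕ → Set S := fun i =>
    (if i = k then avoid P B else Set.univ) ∩ (if i = n + k then B else Set.univ) with hAdef
  have hA : ∀ i, MeasurableSet (A i) := fun i =>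
    .inter (by split_ifs <;> simp [measurableSet_avoid hP hB]) (by split_ifs <;> simp [hB])
  have hevent : {ρ | ρ k ∈ avoid P B ∧ ρ (n + k) ∈ B} = cyl (n + k) A := by
    ext ρ
    simp only [cyl, hAdef, Set.mem_ofPred_eq, Set.mem_inter_iff, Set.mem_ite_univ_right]
    exact ⟨fun ⟨hk, hnk⟩ i _ => ⟨fun hi => hi ▸ hk, fun hi => hi ▸ hnk⟩,
      fun h => ⟨(h k (by omega)).1 rfl, (h (n + k) le_rfl).2 rfl⟩⟩
  rw [hevent, measure_cyl hP hμ _ hA]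
  refine cylProb_eq_zero_of_shift k n μ hA (fun i hi => by
    simp only [hAdef, if_neg hi.ne, if_neg (by omega : i ≠ n + k), Set.inter_univ]) fun s hs => ?_
  simp only [hAdef, Set.mem_inter_iff] at hs
  rw [← measure_cyl hP inferInstance n fun i => hA (i + k)]
  refine measure_mono_null (fun ρ hρ => ?_) hs.1
  have hρn : ρ n ∈ A (n + k) := hρ n le_rfl
  simp only [hAdef, Set.mem_inter_iff] at hρn
  exact ⟨n, hρn.2⟩

theorem measure_evF_inter_evU_avoid (hP : IsPathMeasure κ P) {μ : Measure S}
    (hμ : IsProbabilityMeasure μ) (hB : MeasurableSet B) :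
    P μ (evF B ∩ evU Bᶜ (avoid P B)) = 0 := by
  refine measure_mono_null ?_ (measure_iUnion_null fun k => measure_iUnion_null fun n =>
    measure_mem_avoid_and_mem_eq_zero hP hμ hB k n)
  rintro ρ ⟨⟨m, hm⟩, ⟨k, hk, hbefore⟩⟩
  have hkm : k ≤ m := not_lt.1 fun hmk => hbefore m hmk hm
  exact Set.mem_iUnion₂.2 ⟨k, m - k, hk, by rwa [Nat.sub_add_cancel hkm]⟩

end AvoidSet

/-- approximation scheme for reachability: under `D(μ,B)`, the sequences
`p_n^Yes = Prob_μ(F≤n B)` and `1 − p_n^No` (with `p_n^No = Prob_μ((S∖B) U≤n B̃)`) are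
adjacent and both converge to `Prob_μ(F B)`. -/
theorem statement_18 {S : Type*} [MeasurableSpace S]
    (κ : Kernel S S) [IsMarkovKernel κ]
    (P : Measure S → Measure (ℕ → S)) (hP : IsPathMeasure κ P)
    (μ : Measure S) (hμ : IsProbabilityMeasure μ)
    (B : Set S) (hB : MeasurableSet B)
    (hdec : Decisive P μ B) :
    Monotone (fun n : ℕ => P μ (evFle n B)) ∧
    Antitone (fun n : ℕ => 1 - P μ (evUle n Bᶜ (avoid P B))) ∧
    (∀ n : ℕ, P μ (evFle n B) ≤ 1 - P μ (evUle n Bᶜ (avoid P B))) ∧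
    Tendsto (fun n : ℕ => P μ (evFle n B)) atTop (𝓝 (P μ (evF B))) ∧
    Tendsto (fun n : ℕ => 1 - P μ (evUle n Bᶜ (avoid P B))) atTop (𝓝 (P μ (evF B))) ∧
    Tendsto (fun n : ℕ => P μ (evFle n B) + P μ (evUle n Bᶜ (avoid P B))) atTop (𝓝 1) := by
  have : IsProbabilityMeasure (P μ) := (hP μ hμ).1
  have hunion : P μ (evF B ∪ evU Bᶜ (avoid P B)) = 1 :=
    le_antisymm prob_le_one (hdec ▸ measure_mono (evF_union_evF_subset_evF_union_evU _ _))
  exact adjacent_of_monotone_of_ae_partition (monotone_evFle B) (monotone_evUle _ _)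
    (iUnion_evFle B) (iUnion_evUle _ _) (measurableSet_evF hB)
    (measure_evF_inter_evU_avoid hP hμ hB) hunion

end STS
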